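/- Let G be a connected k-uniform hypergraph with edges e = {u_1,…,u_k} and f = {v_1,…,v_k}, let U_1 = {u_1,…,u_r}, V_1 = {v_1,…,v_r} for some 1 ≤ r < k, U_2 = e∖U_1, V_2 = f∖V_1, and suppose e' = U_1 ∪ V_2 and f' = V_1 ∪ U_2 are k-element subsets of V(G) not in E(G). Let G' be obtained from G by the 2-switching exchanging U_1 with V_1, let 0 ≤ α < 1, and let x be the α-Perron vector of G. If x_{U_1} ≥ x_{V_1} and x_{U_2} ≤ x_{V_2}, then ρ_α(G') ≥ ρ_α(G), with equality if and only if x_{U_1} = x_{V_1} and x_{U_2} = x_{V_2}. -/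

import Mathlib

/-- A (finite) hypergraph on vertex type `V`: a finite set of edges, each a finite
set of vertices.  For the results below the vertex set is the whole type `V`. -/
structure Hypergraph' (V : Type*) where
  edges : Finset (Finset V)

namespace Hypergraph'

variable {V W : Type*}

/-- `G` is `k`-uniform: every edge has exactly `k` vertices. -/
def Uniform (G : Hypergraph' V) (k : ℕ) : Prop := ∀ e ∈ G.edges, e.card = k

/-- The degree of a vertex: the number of edges containing it. -/
def degree [DecidableEq V] (G : Hypergraph' V) (v : V) : ℕ :=
  (G.edges.filter fun e => v ∈ e).card

/-- A walk of length `l` from `u` to `v`: vertices `vs 0 = u, …, vs l = v` and edges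
`es 0, …, es (l-1)` with consecutive vertices lying in the corresponding edge. -/
def Walk (G : Hypergraph' V) (u v : V) (l : ℕ) : Prop :=
  ∃ (vs : Fin (l + 1) → V) (es : Fin l → Finset V),
    vs 0 = u ∧ vs (Fin.last l) = v ∧
    ∀ i : Fin l, es i ∈ G.edges ∧ vs i.castSucc ∈ es i ∧ vs i.succ ∈ es i

/-- `G` is connected: any two vertices are joined by a walk (equivalently, a path). -/
def Connected (G : Hypergraph' V) : Prop := ∀ u v : V, ∃ l, G.Walk u v l

/-- The distance between two vertices: the minimum length of a walk joining them. -/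
noncomputable def hdist (G : Hypergraph' V) (u v : V) : ℕ := sInf {l | G.Walk u v l}

/-- `G` has a cycle: distinct vertices `v_1, …, v_l` and distinct edges `e_1, …, e_l`
(`l ≥ 2`) with `{v_i, v_{i+1}} ⊆ e_i` (indices mod `l`). -/
def HasCycle (G : Hypergraph' V) : Prop :=
  ∃ (l : ℕ) (hl : 2 ≤ l) (vs : Fin l → V) (es : Fin l → Finset V),
    Function.Injective vs ∧ Function.Injective es ∧
    (∀ i, es i ∈ G.edges) ∧
    ∀ i : Fin l, vs i ∈ es i ∧ vs ⟨((i : ℕ) + 1) % l, Nat.mod_lt _ (by omega)⟩ ∈ es i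

/-- A `k`-uniform supertree: a `k`-uniform hypergraph that is connected and acyclic. -/
def IsSupertree (G : Hypergraph' V) (k : ℕ) : Prop :=
  G.Uniform k ∧ G.Connected ∧ ¬ G.HasCycle

/-- `e` is a pendent edge of `G`: one of its vertices has degree at least `2` and all
its other vertices have degree `1`. -/
def IsPendentEdge [DecidableEq V] (G : Hypergraph' V) (e : Finset V) : Prop :=
  e ∈ G.edges ∧ ∃ v ∈ e, 2 ≤ G.degree v ∧ ∀ w ∈ e, w ≠ v → G.degree w = 1

/-- `S` is an independent set: no two of its vertices lie in a common edge. -/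
def IsIndep (G : Hypergraph' V) (S : Finset V) : Prop :=
  ∀ u ∈ S, ∀ v ∈ S, u ≠ v → ∀ e ∈ G.edges, ¬ (u ∈ e ∧ v ∈ e)

/-- The independence number: the maximum size of an independent set. -/
noncomputable def indepNum (G : Hypergraph' V) : ℕ :=
  sSup {n | ∃ S : Finset V, G.IsIndep S ∧ S.card = n}

/-- `M` is a matching: a set of pairwise disjoint edges of `G`. -/
def IsMatching [DecidableEq V] (G : Hypergraph' V) (M : Finset (Finset V)) : Prop :=
  M ⊆ G.edges ∧ ∀ e ∈ M, ∀ f ∈ M, e ≠ f → e ∩ f = ∅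

/-- The matching number: the maximum size of a matching. -/
noncomputable def matchNum [DecidableEq V] (G : Hypergraph' V) : ℕ :=
  sSup {n | ∃ M : Finset (Finset V), G.IsMatching M ∧ M.card = n}

/-- The `α`-spectral radius of a (connected) `k`-uniform hypergraph:
`ρ_α(G) = max { Σ_{e∈E} ( α Σ_{v∈e} x_v^k + (1-α) k Π_{v∈e} x_v ) :
x ≥ 0, Σ_v x_v^k = 1 }`. -/
noncomputable def aspec [Fintype V] (G : Hypergraph' V) (k : ℕ) (α : ℝ) : ℝ :=
  sSup {r : ℝ | ∃ x : V → ℝ, (∀ v, 0 ≤ x v) ∧ (∑ v, x v ^ k) = 1 ∧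
    r = ∑ e ∈ G.edges, (α * ∑ v ∈ e, x v ^ k + (1 - α) * (k : ℝ) * ∏ v ∈ e, x v)}

/-- `x` is the `α`-Perron vector of `G`: the positive unit maximizer in the
variational characterization of `ρ_α(G)`. -/
def IsPerron [Fintype V] (G : Hypergraph' V) (k : ℕ) (α : ℝ) (x : V → ℝ) : Prop :=
  (∀ v, 0 < x v) ∧ (∑ v, x v ^ k) = 1 ∧
  (∑ e ∈ G.edges, (α * ∑ v ∈ e, x v ^ k + (1 - α) * (k : ℝ) * ∏ v ∈ e, x v)) =
    G.aspec k α

/-- The multiset of vertex degrees of `G` (the degree sequence up to ordering). -/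
noncomputable def degreeMultiset [Fintype V] [DecidableEq V] (G : Hypergraph' V) :
    Multiset ℕ :=
  (Finset.univ : Finset V).val.map G.degree

/-- Isomorphism of hypergraphs: a bijection of the vertex sets carrying edges to
edges. -/
def Iso [DecidableEq W] (G : Hypergraph' V) (H : Hypergraph' W) : Prop :=
  ∃ φ : V ≃ W, ∀ e : Finset V, e ∈ G.edges ↔ e.image φ ∈ H.edges

end Hypergraph'

/-!
Write `P_G(z) = Σ_{e ∈ E(G)} (α Σ_{v ∈ e} z_v^k + (1-α) k z_e)`, so that `ρ_α(G)` is the maximum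
of `P_G` on the unit `k`-sphere. The 2-switching preserves all vertex degrees, hence
`P_{G'}(z) = P_G(z) + (1-α) k (z_{U₁} - z_{V₁}) (z_{V₂} - z_{U₂})`, and at the Perron vector `x` of
`G` the correction is nonnegative: `ρ_α(G) ≤ ρ_α(G')`.

For the equality case we use the eigen-equations
`α d(v) x_v^{k-1} + (1-α) Σ_{e ∋ v} x_{e∖v} = ρ x_v^{k-1}`. A positive maximiser of `P_H` satisfies
them with `ρ = ρ_α(H)`: by homogeneity `P_H ≤ ρ_α(H) Σ z_v^k` on the whole orthant, so every
coordinate sits at an interior maximum. Conversely, by AM-GM a positive solution forces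
`ρ_α(H) ≤ ρ`. If `ρ_α(G') = ρ_α(G)`, then `x` also maximises `P_{G'}`, and at a vertex of
`U₁ ∆ V₁` (resp. `U₂ ∆ V₂`) the eigen-equations of `G` and `G'` differ by a positive multiple of
`x_{V₂} - x_{U₂}` (resp. `x_{U₁} - x_{V₁}`). If both products agree, the eigen-equations of `G`
at `x` are those of `G'`, whence `ρ_α(G') ≤ ρ_α(G)`.
-/

open Finset

theorem Real.card_mul_prod_le_sum_pow {ι : Type*} (s : Finset ι) {w : ι → ℝ}
    (hw : ∀ i ∈ s, 0 ≤ w i) : (#s : ℝ) * ∏ i ∈ s, w i ≤ ∑ i ∈ s, w i ^ #s := by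
  rcases s.eq_empty_or_nonempty with rfl | hs
  · simp
  have hn : (#s : ℝ) ≠ 0 := by exact_mod_cast hs.card_pos.ne'
  have hamgm := Real.geom_mean_le_arith_mean_weighted s (fun _ => (#s : ℝ)⁻¹)
    (fun i => w i ^ #s) (fun _ _ => by positivity) (by simp [hn])
    (fun i hi => pow_nonneg (hw i hi) _)
  rw [prod_congr rfl fun i hi => Real.pow_rpow_inv_natCast (hw i hi) hs.card_pos.ne',
    ← mul_sum] at hamgm
  calc (#s : ℝ) * ∏ i ∈ s, w i ≤ #s * ((#s : ℝ)⁻¹ * ∑ i ∈ s, w i ^ #s) := by gcongr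
    _ = ∑ i ∈ s, w i ^ #s := by field_simp

theorem Finset.sum_sdiff_pair_union_pair {ι M : Type*} [DecidableEq ι] [AddCommGroup M]
    {E : Finset ι} {a b c d : ι} (ha : a ∈ E) (hb : b ∈ E) (hab : a ≠ b) (hc : c ∉ E)
    (hd : d ∉ E) (hcd : c ≠ d) (f : ι → M) :
    ∑ i ∈ (E \ {a, b}) ∪ {c, d}, f i = ∑ i ∈ E, f i - f a - f b + f c + f d := by
  have hdisj : Disjoint (E \ {a, b}) {c, d} := by
    simp only [disjoint_insert_right, disjoint_singleton_right, mem_sdiff, hc, hd, false_and,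
      not_false_eq_true, and_self]
  rw [sum_union hdisj, sum_sdiff_eq_sub (insert_subset ha (singleton_subset_iff.mpr hb)),
    sum_pair hab, sum_pair hcd]
  abel

namespace Hypergraph'

variable {V : Type*}

noncomputable def objective (G : Hypergraph' V) (k : ℕ) (α : ℝ) (z : V → ℝ) : ℝ :=
  ∑ e ∈ G.edges, (α * ∑ v ∈ e, z v ^ k + (1 - α) * (k : ℝ) * ∏ v ∈ e, z v)

theorem objective_mul_left {G : Hypergraph' V} {k : ℕ} (hG : G.Uniform k) (α c : ℝ)
    (z : V → ℝ) : G.objective k α (fun v => c * z v) = c ^ k * G.objective k α z := by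
  rw [objective, objective, mul_sum]
  refine sum_congr rfl fun e he => ?_
  simp only [mul_pow, ← mul_sum, prod_mul_distrib, prod_const, hG e he]
  ring

section Fintype

variable [Fintype V] {G : Hypergraph' V} {k : ℕ} {α : ℝ}

theorem objective_le_aspec (hk : k ≠ 0) {z : V → ℝ} (hz0 : ∀ v, 0 ≤ z v)
    (hz1 : ∑ v, z v ^ k = 1) : G.objective k α z ≤ G.aspec k α := by
  refine le_csSup ⟨#G.edges * (|α| + |1 - α| * k), ?_⟩ ⟨z, hz0, hz1, rfl⟩
  rintro _ ⟨y, hy0, hy1, rfl⟩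
  have hpow_le : ∀ s : Finset V, ∑ v ∈ s, y v ^ k ≤ 1 := fun s =>
    hy1 ▸ sum_le_sum_of_subset_of_nonneg (subset_univ s) fun v _ _ => pow_nonneg (hy0 v) k
  have hy_le : ∀ v, y v ≤ 1 := fun v =>
    (pow_le_one_iff_of_nonneg (hy0 v) hk).mp (by simpa using hpow_le {v})
  rw [← nsmul_eq_mul, ← sum_const]
  refine sum_le_sum fun e _ => ?_
  have hs := hpow_le e
  have hs0 : 0 ≤ ∑ v ∈ e, y v ^ k := sum_nonneg fun v _ => pow_nonneg (hy0 v) k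
  have hp : ∏ v ∈ e, y v ≤ 1 := prod_le_one (fun v _ => hy0 v) fun v _ => hy_le v
  have hp0 : 0 ≤ ∏ v ∈ e, y v := prod_nonneg fun v _ => hy0 v
  have h1 : α * ∑ v ∈ e, y v ^ k ≤ |α| := by
    nlinarith [le_abs_self α, abs_nonneg α]
  have h2 : (1 - α) * (k : ℝ) * ∏ v ∈ e, y v ≤ |1 - α| * k := by
    have : (1 - α) * ∏ v ∈ e, y v ≤ |1 - α| := by
      nlinarith [le_abs_self (1 - α), abs_nonneg (1 - α)]
    nlinarith [(Nat.cast_nonneg k : (0 : ℝ) ≤ k)]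
  linarith

theorem objective_le_aspec_mul_sum_pow (hk : k ≠ 0) (hG : G.Uniform k) {z : V → ℝ}
    (hz0 : ∀ v, 0 ≤ z v) : G.objective k α z ≤ G.aspec k α * ∑ v, z v ^ k := by
  set S := ∑ v, z v ^ k
  have hS0 : 0 ≤ S := sum_nonneg fun v _ => pow_nonneg (hz0 v) k
  rcases hS0.eq_or_lt with hS | hS
  · have hz : ∀ v, z v = 0 := fun v => pow_eq_zero_iff hk |>.mp <|
      (sum_eq_zero_iff_of_nonneg fun v _ => pow_nonneg (hz0 v) k).mp hS.symm v (mem_univ v)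
    have hz_eq : z = fun v => 0 * z v := funext fun v => by rw [hz, mul_zero]
    rw [← hS, mul_zero, hz_eq, objective_mul_left hG, zero_pow hk, zero_mul]
  set c := (S ^ (k⁻¹ : ℝ))⁻¹
  have hc0 : 0 ≤ c := inv_nonneg.mpr (Real.rpow_nonneg hS0 _)
  have hc : c ^ k = S⁻¹ := by rw [inv_pow, Real.rpow_inv_natCast_pow hS.le hk]
  have hcz := objective_le_aspec (G := G) (α := α) hk
    (z := fun v => c * z v) (fun v => mul_nonneg hc0 (hz0 v))
    (by simp only [mul_pow, ← mul_sum, hc]; exact inv_mul_cancel₀ hS.ne')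
  rw [objective_mul_left hG, hc, inv_mul_le_iff₀ hS] at hcz
  linarith

end Fintype

variable [DecidableEq V]

/-- The partial derivative `∂/∂x_v ∏_{w ∈ g} x_w`. -/
noncomputable def prodErase (g : Finset V) (x : V → ℝ) (v : V) : ℝ :=
  if v ∈ g then ∏ w ∈ g.erase v, x w else 0

theorem prodErase_union {A B : Finset V} (hAB : Disjoint A B) (x : V → ℝ) (v : V) :
    prodErase (A ∪ B) x v = prodErase A x v * ∏ w ∈ B, x w + (∏ w ∈ A, x w) * prodErase B x v := by
  by_cases hA : v ∈ A
  · have hB : v ∉ B := disjoint_left.mp hAB hA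
    rw [prodErase, if_pos (mem_union_left B hA), erase_union_distrib, erase_eq_of_notMem hB,
      prod_union (disjoint_of_subset_left (erase_subset v A) hAB), prodErase, if_pos hA,
      prodErase, if_neg hB, mul_zero, add_zero]
  by_cases hB : v ∈ B
  · rw [prodErase, if_pos (mem_union_right A hB), erase_union_distrib, erase_eq_of_notMem hA,
      prod_union (disjoint_of_subset_right (erase_subset v B) hAB), prodErase, if_neg hA,
      prodErase, if_pos hB, zero_mul, zero_add]
  · simp [prodErase, hA, hB]

theorem prodErase_of_notMem {A : Finset V} {x : V → ℝ} {v : V} (hv : v ∉ A) :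
    prodErase A x v = 0 :=
  if_neg hv

theorem mul_prodErase_of_mem {A : Finset V} {v : V} (hv : v ∈ A) (x : V → ℝ) :
    x v * prodErase A x v = ∏ w ∈ A, x w := by
  rw [prodErase, if_pos hv, mul_prod_erase A x hv]

theorem prodErase_pos {A : Finset V} {x : V → ℝ} (hx : ∀ v, 0 < x v) {v : V} (hv : v ∈ A) :
    0 < prodErase A x v := by
  rw [prodErase, if_pos hv]
  exact prod_pos fun w _ => hx w

noncomputable def linkSum (G : Hypergraph' V) (x : V → ℝ) (v : V) : ℝ :=
  ∑ g ∈ G.edges, prodErase g x v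

/-- The `H`-eigen-equation `A_α(G) x^{k-1} = ρ x^{[k-1]}` of the tensor `αD(G) + (1-α)A(G)`. -/
def IsEigenvector (G : Hypergraph' V) (k : ℕ) (α : ℝ) (x : V → ℝ) (ρ : ℝ) : Prop :=
  ∀ v, α * G.degree v * x v ^ (k - 1) + (1 - α) * G.linkSum x v = ρ * x v ^ (k - 1)

theorem sum_pow_update_of_mem {g : Finset V} {v : V} (hv : v ∈ g) (x : V → ℝ) (s : ℝ)
    (k : ℕ) :
    ∑ w ∈ g, Function.update x v s w ^ k = ∑ w ∈ g, x w ^ k + (s ^ k - x v ^ k) := by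
  rw [← add_sum_erase g _ hv, ← add_sum_erase g (fun w => x w ^ k) hv,
    sum_congr rfl fun w hw => by rw [Function.update_of_ne (ne_of_mem_erase hw)],
    Function.update_self]
  ring

theorem prod_update_eq_mul_prodErase {g : Finset V} {v : V} (hv : v ∈ g) (x : V → ℝ) (s : ℝ) :
    ∏ w ∈ g, Function.update x v s w = s * prodErase g x v := by
  rw [prod_update_of_mem hv, sdiff_singleton_eq_erase, prodErase, if_pos hv]

theorem objective_update (G : Hypergraph' V) (k : ℕ) (α : ℝ) (x : V → ℝ) (v : V) (s : ℝ) :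
    G.objective k α (Function.update x v s) = G.objective k α x
      + α * G.degree v * (s ^ k - x v ^ k) + (1 - α) * k * (s - x v) * G.linkSum x v := by
  have hedge : ∀ g : Finset V,
      α * ∑ w ∈ g, Function.update x v s w ^ k + (1 - α) * k * ∏ w ∈ g, Function.update x v s w
        = α * ∑ w ∈ g, x w ^ k + (1 - α) * k * ∏ w ∈ g, x w
          + α * (if v ∈ g then 1 else 0) * (s ^ k - x v ^ k)
          + (1 - α) * k * (s - x v) * prodErase g x v := by
    intro g
    by_cases hv : v ∈ g
    · rw [sum_pow_update_of_mem hv, prod_update_eq_mul_prodErase hv, ← mul_prodErase_of_mem hv,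
        if_pos hv]
      ring
    · have hupd : ∀ w ∈ g, Function.update x v s w = x w := fun w hw =>
        Function.update_of_ne (ne_of_mem_of_not_mem hw hv) _ _
      rw [sum_congr rfl fun w hw => by rw [hupd w hw], prod_congr rfl hupd, prodErase,
        if_neg hv, if_neg hv]
      ring
  rw [objective, sum_congr rfl fun g _ => hedge g, sum_add_distrib, sum_add_distrib,
    ← objective, ← sum_mul, ← mul_sum, ← mul_sum, ← linkSum, degree, natCast_card_filter]

section Fintype

variable [Fintype V] {G : Hypergraph' V} {k : ℕ} {α : ℝ} {x : V → ℝ}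

theorem isEigenvector_of_objective_eq_aspec (hk : k ≠ 0) (hG : G.Uniform k)
    (hx : ∀ v, 0 < x v) (hx1 : ∑ v, x v ^ k = 1) (hmax : G.objective k α x = G.aspec k α) :
    G.IsEigenvector k α x (G.aspec k α) := by
  intro v
  set ρ := G.aspec k α
  set d : ℝ := (G.degree v : ℝ)
  set L := G.linkSum x v
  let ψ : ℝ → ℝ := fun s => (α * d - ρ) * s ^ k + (1 - α) * k * L * s
  -- `x` maximises `objective - ρ * ∑ _ ^ k` on the orthant, in particular along coordinate `v`
  have hψ : IsLocalMax ψ (x v) := by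
    filter_upwards [Ioi_mem_nhds (hx v)] with s hs
    have hle := objective_le_aspec_mul_sum_pow (G := G) (α := α) hk hG
      (z := Function.update x v s) fun w => by
        rcases eq_or_ne w v with rfl | hw
        · simpa using (Set.mem_Ioi.mp hs).le
        · simpa [hw] using (hx w).le
    rw [objective_update, sum_pow_update_of_mem (mem_univ v), hx1, hmax] at hle
    simp only [ψ]
    linarith
  have hderiv : HasDerivAt ψ ((α * d - ρ) * (k * x v ^ (k - 1)) + (1 - α) * k * L) (x v) := by
    simpa using ((hasDerivAt_pow k (x v)).const_mul (α * d - ρ)).fun_add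
      ((hasDerivAt_id' (x v)).const_mul ((1 - α) * k * L))
  have h := hψ.hasDerivAt_eq_zero hderiv
  have hk' : (k : ℝ) ≠ 0 := by exact_mod_cast hk
  have : (k : ℝ) * (α * d * x v ^ (k - 1) + (1 - α) * L - ρ * x v ^ (k - 1)) = 0 := by
    linear_combination h
  linarith [(mul_eq_zero.mp this).resolve_left hk']

theorem card_mul_prod_le_sum_prodErase {g : Finset V} (hx : ∀ v, 0 < x v)
    {y : V → ℝ} (hy : ∀ v, 0 ≤ y v) :
    (#g : ℝ) * ∏ v ∈ g, y v ≤ ∑ v, (y v / x v) ^ #g * (x v * prodErase g x v) := by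
  have hyx : ∏ v ∈ g, y v = (∏ v ∈ g, y v / x v) * ∏ w ∈ g, x w := by
    rw [prod_div_distrib, div_mul_cancel₀ _ (prod_pos fun w _ => hx w).ne']
  calc (#g : ℝ) * ∏ v ∈ g, y v
      = (#g * ∏ v ∈ g, y v / x v) * ∏ w ∈ g, x w := by rw [hyx, mul_assoc]
    _ ≤ (∑ v ∈ g, (y v / x v) ^ #g) * ∏ w ∈ g, x w := by
        gcongr
        · exact prod_nonneg fun w _ => (hx w).le
        · exact Real.card_mul_prod_le_sum_pow g fun v _ => div_nonneg (hy v) (hx v).le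
    _ = ∑ v, (y v / x v) ^ #g * (x v * prodErase g x v) := by
        rw [sum_mul, ← sum_subset (subset_univ g) fun v _ hv => by simp [prodErase, hv]]
        exact sum_congr rfl fun v hv => by rw [mul_prodErase_of_mem hv]

theorem objective_le_of_isEigenvector (hk : k ≠ 0) (hG : G.Uniform k) (hα : α ≤ 1)
    (hx : ∀ v, 0 < x v) {ρ : ℝ} (hρ : G.IsEigenvector k α x ρ) {y : V → ℝ}
    (hy : ∀ v, 0 ≤ y v) : G.objective k α y ≤ ρ * ∑ v, y v ^ k := by
  have hedge : ∀ g ∈ G.edges,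
      α * ∑ v ∈ g, y v ^ k + (1 - α) * k * ∏ v ∈ g, y v
        ≤ ∑ v, (α * (if v ∈ g then 1 else 0) * y v ^ k
          + (1 - α) * ((y v / x v) ^ k * (x v * prodErase g x v))) := by
    intro g hg
    have h := card_mul_prod_le_sum_prodErase (g := g) hx hy
    rw [hG g hg] at h
    have hdeg : ∑ v, α * (if v ∈ g then 1 else 0) * y v ^ k = α * ∑ v ∈ g, y v ^ k := by
      simp only [mul_ite, mul_one, mul_zero, ite_mul, zero_mul, sum_ite_mem, univ_inter, mul_sum]
    rw [sum_add_distrib, hdeg, ← mul_sum]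
    nlinarith [mul_le_mul_of_nonneg_left h (sub_nonneg.mpr hα)]
  have hvertex : ∀ v, α * G.degree v * y v ^ k
      + (1 - α) * ((y v / x v) ^ k * (x v * G.linkSum x v)) = ρ * y v ^ k := by
    intro v
    have hxv : x v * x v ^ (k - 1) = x v ^ k := by
      rw [← pow_succ', Nat.sub_add_cancel (Nat.one_le_iff_ne_zero.mpr hk)]
    have hyx : (y v / x v) ^ k * x v ^ k = y v ^ k := by
      rw [div_pow, div_mul_cancel₀ _ (pow_pos (hx v) k).ne']
    linear_combination (y v / x v) ^ k * x v * hρ v + (ρ - α * G.degree v) * (y v / x v) ^ k * hxv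
      + (ρ - α * G.degree v) * hyx
  calc G.objective k α y
      ≤ ∑ g ∈ G.edges, ∑ v, (α * (if v ∈ g then 1 else 0) * y v ^ k
          + (1 - α) * ((y v / x v) ^ k * (x v * prodErase g x v))) := sum_le_sum hedge
    _ = ∑ v, (α * G.degree v * y v ^ k
          + (1 - α) * ((y v / x v) ^ k * (x v * G.linkSum x v))) := by
        rw [sum_comm]
        refine sum_congr rfl fun v _ => ?_
        rw [sum_add_distrib, ← sum_mul, ← mul_sum, degree, natCast_card_filter, ← mul_sum,
          ← mul_sum, ← mul_sum, linkSum]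
    _ = ρ * ∑ v, y v ^ k := by rw [sum_congr rfl fun v _ => hvertex v, mul_sum]

theorem aspec_le_of_isEigenvector (hk : k ≠ 0) (hG : G.Uniform k) (hα : α ≤ 1)
    (hx : ∀ v, 0 < x v) (hx1 : ∑ v, x v ^ k = 1) {ρ : ℝ} (hρ : G.IsEigenvector k α x ρ) :
    G.aspec k α ≤ ρ := by
  refine csSup_le ⟨_, x, fun v => (hx v).le, hx1, rfl⟩ ?_
  rintro _ ⟨y, hy0, hy1, rfl⟩
  have h := objective_le_of_isEigenvector hk hG hα hx hρ hy0
  rwa [hy1, mul_one] at h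

end Fintype

/-- `G'` arises from `G` by the 2-switching of `e = U₁ ∪ U₂` and `f = V₁ ∪ V₂` into
`e' = U₁ ∪ V₂` and `f' = V₁ ∪ U₂`. -/
structure IsTwoSwitch (G G' : Hypergraph' V) (U₁ U₂ V₁ V₂ : Finset V) : Prop where
  disjoint_U : Disjoint U₁ U₂
  disjoint_V : Disjoint V₁ V₂
  disjoint_UV : Disjoint U₁ V₂
  disjoint_VU : Disjoint V₁ U₂
  mem_e : U₁ ∪ U₂ ∈ G.edges
  mem_f : V₁ ∪ V₂ ∈ G.edges
  not_mem_e' : U₁ ∪ V₂ ∉ G.edges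
  not_mem_f' : V₁ ∪ U₂ ∉ G.edges
  edges_eq : G'.edges = (G.edges \ {U₁ ∪ U₂, V₁ ∪ V₂}) ∪ {U₁ ∪ V₂, V₁ ∪ U₂}

namespace IsTwoSwitch

variable {G G' : Hypergraph' V} {U₁ U₂ V₁ V₂ : Finset V}

theorem left_ne (h : IsTwoSwitch G G' U₁ U₂ V₁ V₂) : U₁ ≠ V₁ := by
  rintro rfl
  exact h.not_mem_e' h.mem_f

theorem right_ne (h : IsTwoSwitch G G' U₁ U₂ V₁ V₂) : U₂ ≠ V₂ := by
  rintro rfl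
  exact h.not_mem_f' h.mem_f

theorem e_ne_f (h : IsTwoSwitch G G' U₁ U₂ V₁ V₂) : U₁ ∪ U₂ ≠ V₁ ∪ V₂ := by
  intro hef
  refine h.left_ne (subset_antisymm (fun u hu => ?_) fun v hv => ?_)
  · have := hef ▸ mem_union_left U₂ hu
    exact (mem_union.mp this).resolve_right (disjoint_left.mp h.disjoint_UV hu)
  · have := hef.symm ▸ mem_union_left V₂ hv
    exact (mem_union.mp this).resolve_right (disjoint_left.mp h.disjoint_VU hv)

theorem e'_ne_f' (h : IsTwoSwitch G G' U₁ U₂ V₁ V₂) : U₁ ∪ V₂ ≠ V₁ ∪ U₂ := by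
  intro hef
  refine h.left_ne (subset_antisymm (fun u hu => ?_) fun v hv => ?_)
  · have := hef ▸ mem_union_left V₂ hu
    exact (mem_union.mp this).resolve_right (disjoint_left.mp h.disjoint_U hu)
  · have := hef.symm ▸ mem_union_left U₂ hv
    exact (mem_union.mp this).resolve_right (disjoint_left.mp h.disjoint_V hv)

theorem sum_edges (h : IsTwoSwitch G G' U₁ U₂ V₁ V₂) (c : Finset V → ℝ) :
    ∑ g ∈ G'.edges, c g = ∑ g ∈ G.edges, c g - c (U₁ ∪ U₂) - c (V₁ ∪ V₂)
      + c (U₁ ∪ V₂) + c (V₁ ∪ U₂) := by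
  rw [h.edges_eq, sum_sdiff_pair_union_pair h.mem_e h.mem_f h.e_ne_f h.not_mem_e' h.not_mem_f'
    h.e'_ne_f']

theorem uniform (h : IsTwoSwitch G G' U₁ U₂ V₁ V₂) {k : ℕ} (hG : G.Uniform k)
    (he' : #(U₁ ∪ V₂) = k) (hf' : #(V₁ ∪ U₂) = k) : G'.Uniform k := by
  intro g hg
  rw [h.edges_eq] at hg
  rcases mem_union.mp hg with hg | hg
  · exact hG g (mem_sdiff.mp hg).1
  rcases mem_insert.mp hg with rfl | hg
  · exact he'
  · rwa [mem_singleton.mp hg]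

theorem objective_eq (h : IsTwoSwitch G G' U₁ U₂ V₁ V₂) (k : ℕ) (α : ℝ) (z : V → ℝ) :
    G'.objective k α z = G.objective k α z
      + (1 - α) * k * ((∏ w ∈ U₁, z w - ∏ w ∈ V₁, z w) * (∏ w ∈ V₂, z w - ∏ w ∈ U₂, z w)) := by
  rw [objective, h.sum_edges, ← objective]
  simp only [sum_union h.disjoint_U, sum_union h.disjoint_V, sum_union h.disjoint_UV,
    sum_union h.disjoint_VU, prod_union h.disjoint_U, prod_union h.disjoint_V,
    prod_union h.disjoint_UV, prod_union h.disjoint_VU]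
  ring

theorem degree_eq (h : IsTwoSwitch G G' U₁ U₂ V₁ V₂) (v : V) : G'.degree v = G.degree v := by
  have hind : ∀ {A B : Finset V}, Disjoint A B →
      (if v ∈ A ∪ B then 1 else 0 : ℝ) = (if v ∈ A then 1 else 0) + (if v ∈ B then 1 else 0) :=
    fun {A B} hAB => by
      by_cases hA : v ∈ A
      · simp [hA, disjoint_left.mp hAB hA]
      · simp [hA]
  have hR : (G'.degree v : ℝ) = G.degree v := by
    rw [degree, degree, natCast_card_filter, natCast_card_filter, h.sum_edges,
      hind h.disjoint_U, hind h.disjoint_V, hind h.disjoint_UV, hind h.disjoint_VU]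
    ring
  exact_mod_cast hR

theorem linkSum_eq (h : IsTwoSwitch G G' U₁ U₂ V₁ V₂) (x : V → ℝ) (v : V) :
    G'.linkSum x v = G.linkSum x v
      + prodErase U₁ x v * (∏ w ∈ V₂, x w - ∏ w ∈ U₂, x w)
      + prodErase V₂ x v * (∏ w ∈ U₁, x w - ∏ w ∈ V₁, x w)
      + prodErase V₁ x v * (∏ w ∈ U₂, x w - ∏ w ∈ V₂, x w)
      + prodErase U₂ x v * (∏ w ∈ V₁, x w - ∏ w ∈ U₁, x w) := by
  rw [linkSum, h.sum_edges, ← linkSum, prodErase_union h.disjoint_U, prodErase_union h.disjoint_V,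
    prodErase_union h.disjoint_UV, prodErase_union h.disjoint_VU]
  ring

theorem linkSum_eq_of_isEigenvector (h : IsTwoSwitch G G' U₁ U₂ V₁ V₂) {k : ℕ} {α ρ : ℝ}
    {x : V → ℝ} (hα : α < 1) (hG : G.IsEigenvector k α x ρ) (hG' : G'.IsEigenvector k α x ρ)
    (v : V) : G'.linkSum x v = G.linkSum x v := by
  have hd : (G'.degree v : ℝ) = G.degree v := by rw [h.degree_eq]
  have hlink : (1 - α) * (G'.linkSum x v - G.linkSum x v) = 0 := by
    linear_combination hG' v - hG v - α * x v ^ (k - 1) * hd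
  linarith [(mul_eq_zero.mp hlink).resolve_left (sub_ne_zero.mpr hα.ne')]

theorem prod_eq_of_linkSum_eq (h : IsTwoSwitch G G' U₁ U₂ V₁ V₂) {x : V → ℝ}
    (hx : ∀ v, 0 < x v) (hlink : ∀ v, G'.linkSum x v = G.linkSum x v) :
    ∏ w ∈ U₁, x w = ∏ w ∈ V₁, x w ∧ ∏ w ∈ U₂, x w = ∏ w ∈ V₂, x w := by
  have hdefect := fun v => (h.linkSum_eq x v).symm.trans (hlink v)
  have hfactor : ∀ {A : Finset V} {a : V} {c : ℝ}, a ∈ A → prodErase A x a * c = 0 → c = 0 :=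
    fun ha hc => (mul_eq_zero.mp hc).resolve_left (prodErase_pos hx ha).ne'
  constructor
  · obtain ⟨a, ha⟩ := symmDiff_nonempty.mpr h.right_ne
    rcases mem_symmDiff.mp ha with ⟨haU, haV⟩ | ⟨haV, haU⟩
    · have := hdefect a
      simp only [prodErase_of_notMem haV, prodErase_of_notMem (disjoint_right.mp h.disjoint_U haU),
        prodErase_of_notMem (disjoint_right.mp h.disjoint_VU haU), zero_mul, add_zero,
        add_eq_left] at this
      linarith [hfactor haU this]
    · have := hdefect a
      simp only [prodErase_of_notMem haU, prodErase_of_notMem (disjoint_right.mp h.disjoint_UV haV),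
        prodErase_of_notMem (disjoint_right.mp h.disjoint_V haV), zero_mul, add_zero,
        add_eq_left] at this
      linarith [hfactor haV this]
  · obtain ⟨a, ha⟩ := symmDiff_nonempty.mpr h.left_ne
    rcases mem_symmDiff.mp ha with ⟨haU, haV⟩ | ⟨haV, haU⟩
    · have := hdefect a
      simp only [prodErase_of_notMem haV, prodErase_of_notMem (disjoint_left.mp h.disjoint_U haU),
        prodErase_of_notMem (disjoint_left.mp h.disjoint_UV haU), zero_mul, add_zero,
        add_eq_left] at this
      linarith [hfactor haU this]
    · have := hdefect a
      simp only [prodErase_of_notMem haU, prodErase_of_notMem (disjoint_left.mp h.disjoint_V haV),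
        prodErase_of_notMem (disjoint_left.mp h.disjoint_VU haV), zero_mul, add_zero,
        add_eq_left] at this
      linarith [hfactor haV this]

end IsTwoSwitch

theorem isTwoSwitch_sdiff {G G' : Hypergraph' V} {k : ℕ} (hG : G.Uniform k)
    {e f U₁ V₁ : Finset V} (he : e ∈ G.edges) (hf : f ∈ G.edges) (hU₁ : U₁ ⊆ e) (hV₁ : V₁ ⊆ f)
    (hcard : #U₁ = #V₁) (he' : #(U₁ ∪ (f \ V₁)) = k) (hf' : #(V₁ ∪ (e \ U₁)) = k)
    (he'G : U₁ ∪ (f \ V₁) ∉ G.edges) (hf'G : V₁ ∪ (e \ U₁) ∉ G.edges)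
    (hG' : G'.edges = (G.edges \ {e, f}) ∪ {U₁ ∪ (f \ V₁), V₁ ∪ (e \ U₁)}) :
    G.IsTwoSwitch G' U₁ (e \ U₁) V₁ (f \ V₁) := by
  have hUe := union_sdiff_of_subset hU₁
  have hVf := union_sdiff_of_subset hV₁
  have hUV : Disjoint U₁ (f \ V₁) := card_union_eq_card_add_card.mp <| by
    rw [he', ← hG f hf, ← card_sdiff_add_card_eq_card hV₁, hcard, add_comm]
  have hVU : Disjoint V₁ (e \ U₁) := card_union_eq_card_add_card.mp <| by
    rw [hf', ← hG e he, ← card_sdiff_add_card_eq_card hU₁, hcard, add_comm]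
  exact ⟨disjoint_sdiff, disjoint_sdiff, hUV, hVU, by rwa [hUe], by rwa [hVf], he'G, hf'G,
    by rw [hUe, hVf, hG']⟩

namespace IsTwoSwitch

variable [Fintype V] {G G' : Hypergraph' V} {U₁ U₂ V₁ V₂ : Finset V} {k : ℕ} {α : ℝ}
  {x : V → ℝ}

theorem aspec_le (h : IsTwoSwitch G G' U₁ U₂ V₁ V₂) (hk : k ≠ 0) (hα : α ≤ 1)
    (hx : ∀ v, 0 ≤ x v) (hx1 : ∑ v, x v ^ k = 1) (hmax : G.objective k α x = G.aspec k α)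
    (hD : 0 ≤ (∏ w ∈ U₁, x w - ∏ w ∈ V₁, x w) * (∏ w ∈ V₂, x w - ∏ w ∈ U₂, x w)) :
    G.aspec k α ≤ G'.aspec k α := by
  have hc : 0 ≤ (1 - α) * k := mul_nonneg (sub_nonneg.mpr hα) k.cast_nonneg
  calc G.aspec k α = G.objective k α x := hmax.symm
    _ ≤ G'.objective k α x := by rw [h.objective_eq]; nlinarith
    _ ≤ G'.aspec k α := objective_le_aspec hk hx hx1

theorem prod_eq_of_aspec_eq (h : IsTwoSwitch G G' U₁ U₂ V₁ V₂) (hk : k ≠ 0)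
    (hG : G.Uniform k) (hG' : G'.Uniform k) (hα : α < 1) (hx : ∀ v, 0 < x v)
    (hx1 : ∑ v, x v ^ k = 1) (hmax : G.objective k α x = G.aspec k α)
    (hD : 0 ≤ (∏ w ∈ U₁, x w - ∏ w ∈ V₁, x w) * (∏ w ∈ V₂, x w - ∏ w ∈ U₂, x w))
    (heq : G.aspec k α = G'.aspec k α) :
    ∏ w ∈ U₁, x w = ∏ w ∈ V₁, x w ∧ ∏ w ∈ U₂, x w = ∏ w ∈ V₂, x w := by
  have hc : 0 ≤ (1 - α) * k := mul_nonneg (sub_nonneg.mpr hα.le) k.cast_nonneg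
  have hmax' : G'.objective k α x = G'.aspec k α :=
    (objective_le_aspec hk (fun v => (hx v).le) hx1).antisymm <| by
      rw [h.objective_eq, ← heq, ← hmax]; nlinarith
  have hxG := isEigenvector_of_objective_eq_aspec hk hG hx hx1 hmax
  have hxG' := isEigenvector_of_objective_eq_aspec hk hG' hx hx1 hmax'
  rw [← heq] at hxG'
  exact h.prod_eq_of_linkSum_eq hx (h.linkSum_eq_of_isEigenvector hα hxG hxG')

theorem aspec_le_of_prod_eq (h : IsTwoSwitch G G' U₁ U₂ V₁ V₂) (hk : k ≠ 0)
    (hG : G.Uniform k) (hG' : G'.Uniform k) (hα : α ≤ 1) (hx : ∀ v, 0 < x v)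
    (hx1 : ∑ v, x v ^ k = 1) (hmax : G.objective k α x = G.aspec k α)
    (hU : ∏ w ∈ U₁, x w = ∏ w ∈ V₁, x w) (hV : ∏ w ∈ U₂, x w = ∏ w ∈ V₂, x w) :
    G'.aspec k α ≤ G.aspec k α := by
  refine aspec_le_of_isEigenvector hk hG' hα hx hx1 fun v => ?_
  rw [h.degree_eq, h.linkSum_eq, hU, hV]
  simp only [sub_self, mul_zero, add_zero]
  exact isEigenvector_of_objective_eq_aspec hk hG hx hx1 hmax v

end IsTwoSwitch

end Hypergraph'

theorem aspec_le_of_two_switching_general (k : ℕ) (hk : 2 ≤ k)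
    {V : Type} [Fintype V] [DecidableEq V] (G G' : Hypergraph' V)
    (hGu : G.Uniform k)
    (e f : Finset V) (he : e ∈ G.edges) (hf : f ∈ G.edges)
    (r : ℕ)
    (U₁ V₁ : Finset V) (hU₁ : U₁ ⊆ e) (hV₁ : V₁ ⊆ f)
    (hU₁c : U₁.card = r) (hV₁c : V₁.card = r)
    (he'c : (U₁ ∪ (f \ V₁)).card = k) (hf'c : (V₁ ∪ (e \ U₁)).card = k)
    (he'new : U₁ ∪ (f \ V₁) ∉ G.edges) (hf'new : V₁ ∪ (e \ U₁) ∉ G.edges)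
    (hG' : G'.edges = (G.edges \ {e, f}) ∪ {U₁ ∪ (f \ V₁), V₁ ∪ (e \ U₁)})
    (α : ℝ) (hα1 : α < 1)
    (x : V → ℝ) (hx : G.IsPerron k α x)
    (h1 : ∏ w ∈ V₁, x w ≤ ∏ w ∈ U₁, x w)
    (h2 : ∏ w ∈ e \ U₁, x w ≤ ∏ w ∈ f \ V₁, x w) :
    G.aspec k α ≤ G'.aspec k α ∧
      (G.aspec k α = G'.aspec k α ↔
        (∏ w ∈ U₁, x w = ∏ w ∈ V₁, x w ∧
          ∏ w ∈ e \ U₁, x w = ∏ w ∈ f \ V₁, x w)) := by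
  obtain ⟨hpos, hx1, hmax⟩ := hx
  have hk0 : k ≠ 0 := by omega
  have hsw := Hypergraph'.isTwoSwitch_sdiff hGu he hf hU₁ hV₁ (hU₁c.trans hV₁c.symm) he'c hf'c
    he'new hf'new hG'
  have hG'u := hsw.uniform hGu he'c hf'c
  have hD := mul_nonneg (sub_nonneg.mpr h1) (sub_nonneg.mpr h2)
  have hle := hsw.aspec_le hk0 hα1.le (fun v => (hpos v).le) hx1 hmax hD
  refine ⟨hle, fun heq => ?_, fun ⟨hU, hV⟩ => ?_⟩
  · exact hsw.prod_eq_of_aspec_eq hk0 hGu hG'u hα1 hpos hx1 hmax hD heq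
  · exact hle.antisymm (hsw.aspec_le_of_prod_eq hk0 hGu hG'u hα1.le hpos hx1 hmax hU hV)

/-- 2-switching lemma: with `e, f ∈ E(G)`, `U₁ ⊆ e`, `V₁ ⊆ f` of size
`r` (`1 ≤ r < k`), `U₂ = e∖U₁`, `V₂ = f∖V₁`, and `e' = U₁ ∪ V₂`, `f' = V₁ ∪ U₂`
`k`-sets not in `E(G)`, if `G'` is obtained from `G` by the 2-switching and the
`α`-Perron vector `x` of `G` satisfies `x_{U₁} ≥ x_{V₁}` and `x_{U₂} ≤ x_{V₂}`,
then `ρ_α(G') ≥ ρ_α(G)`, with equality iff `x_{U₁} = x_{V₁}` and `x_{U₂} = x_{V₂}`. -/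
theorem aspec_le_of_two_switching (k : ℕ) (hk : 2 ≤ k)
    {V : Type} [Fintype V] [DecidableEq V] (G G' : Hypergraph' V)
    (hGu : G.Uniform k) (hGc : G.Connected)
    (e f : Finset V) (he : e ∈ G.edges) (hf : f ∈ G.edges)
    (r : ℕ) (hr1 : 1 ≤ r) (hrk : r < k)
    (U₁ V₁ : Finset V) (hU₁ : U₁ ⊆ e) (hV₁ : V₁ ⊆ f)
    (hU₁c : U₁.card = r) (hV₁c : V₁.card = r)
    (he'c : (U₁ ∪ (f \ V₁)).card = k) (hf'c : (V₁ ∪ (e \ U₁)).card = k)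
    (he'new : U₁ ∪ (f \ V₁) ∉ G.edges) (hf'new : V₁ ∪ (e \ U₁) ∉ G.edges)
    (hG' : G'.edges = (G.edges \ {e, f}) ∪ {U₁ ∪ (f \ V₁), V₁ ∪ (e \ U₁)})
    (α : ℝ) (hα0 : 0 ≤ α) (hα1 : α < 1)
    (x : V → ℝ) (hx : G.IsPerron k α x)
    (h1 : ∏ w ∈ V₁, x w ≤ ∏ w ∈ U₁, x w)
    (h2 : ∏ w ∈ e \ U₁, x w ≤ ∏ w ∈ f \ V₁, x w) :
    G.aspec k α ≤ G'.aspec k α ∧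
      (G.aspec k α = G'.aspec k α ↔
        (∏ w ∈ U₁, x w = ∏ w ∈ V₁, x w ∧
          ∏ w ∈ e \ U₁, x w = ∏ w ∈ f \ V₁, x w)) :=
  aspec_le_of_two_switching_general k hk G G' hGu e f he hf r U₁ V₁ hU₁ hV₁ hU₁c hV₁c he'c hf'c
    he'new hf'new hG' α hα1 x hx h1 h2
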